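/- arXiv:1606.08211 — 2 statements merged into one kernel-verified Lean document; each statement's English description precedes it below -/
import Mathlib

section
/- Let G : Ω × Ω → [0,∞] be measurable with G(x,y) ≤ W(x-y) for all x,y ∈ Ω, where W ≥ 0 on ℝ^N, W ∈ L^r(ℝ^N) with r > N/2, and W = 0 outside Ω. Set q = 2r/(2r-1). Then there exists C_G > 0 such that for all u, v, w ∈ L^{2q}(Ω), |∫_Ω (∫_Ω G(x,y) v(y)² dy) u(x) w(x) dx| ≤ C_G ‖v‖²_{L^{2q}(Ω)} ‖u‖_{L^{2q}(Ω)} ‖w‖_{L^{2q}(Ω)}. -/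
/-!
Since `0 ≤ G(x,y) ≤ W(x - y)` on `Ω × Ω`, the form is dominated by the trilinear Young form
`∫∫ W(x - y) f(y) g(x)` with `f = v²` and `g = |u w|`. Writing its integrand as
`(W^r f^q)^(1/2r) (W^r g^q)^(1/2r) (f^q g^q)^(1 - 1/r)`, Hölder's inequality with three factors
on `Ω × Ω` and the translation invariance of Lebesgue measure bound it by
`‖W‖_r ‖f‖_q ‖g‖_q`; here `r ≥ 1` (from `r > N/2 ≥ 1`) makes all three exponents nonnegative.
Finally `‖v²‖_q = ‖v‖_{2q}²` and Cauchy–Schwarz gives `‖u w‖_q ≤ ‖u‖_{2q} ‖w‖_{2q}`.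
-/

open MeasureTheory Real Filter
open scoped ENNReal

namespace ENNReal

variable {α : Type*} [MeasurableSpace α]

theorem lintegral_mul_mul_norm_pow_le {μ : Measure α} {f g h : α → ℝ≥0∞}
    (hf : AEMeasurable f μ) (hg : AEMeasurable g μ) (hh : AEMeasurable h μ) {a b c : ℝ}
    (ha : 0 ≤ a) (hb : 0 ≤ b) (hc : 0 ≤ c) (habc : a + b + c = 1) :
    ∫⁻ x, f x ^ a * g x ^ b * h x ^ c ∂μ ≤
      (∫⁻ x, f x ∂μ) ^ a * (∫⁻ x, g x ∂μ) ^ b * (∫⁻ x, h x ∂μ) ^ c := by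
  have := lintegral_prod_norm_pow_le (μ := μ) (f := ![f, g, h]) (p := ![a, b, c]) Finset.univ
    (by simp [Fin.forall_fin_succ, hf, hg, hh]) (by simpa [Fin.sum_univ_three] using habc)
    (by simp [Fin.forall_fin_succ, ha, hb, hc])
  simpa [Fin.prod_univ_three, mul_assoc] using this

theorem mul_mul_eq_rpow_mul_rpow_mul_rpow (k s t : ℝ≥0∞) {r q a b : ℝ} (hr : 0 ≤ r) (hq : 0 ≤ q)
    (ha : 0 ≤ a) (hb : 0 ≤ b) (hra : r * a + r * a = 1) (hqab : q * a + q * b = 1) :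
    k * s * t = (k ^ r * s ^ q) ^ a * (k ^ r * t ^ q) ^ a * (s ^ q * t ^ q) ^ b := by
  simp only [mul_rpow_of_nonneg _ _ ha, mul_rpow_of_nonneg _ _ hb, ← rpow_mul]
  have hk : k ^ (r * a) * k ^ (r * a) = k := by
    rw [← rpow_add_of_nonneg _ _ (by positivity) (by positivity), hra, rpow_one]
  have hs : s ^ (q * a) * s ^ (q * b) = s := by
    rw [← rpow_add_of_nonneg _ _ (by positivity) (by positivity), hqab, rpow_one]
  have ht : t ^ (q * a) * t ^ (q * b) = t := by
    rw [← rpow_add_of_nonneg _ _ (by positivity) (by positivity), hqab, rpow_one]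
  conv_lhs => rw [← hk, ← hs, ← ht]
  ring

end ENNReal

open ENNReal Function

variable {α : Type*} [MeasurableSpace α]

theorem lintegral_lintegral_mul_le_of_lintegral_rpow_le {ν : Measure α} [SFinite ν]
    {k : α → α → ℝ≥0∞} {f g : α → ℝ≥0∞} (hk : Measurable (uncurry k)) (hf : AEMeasurable f ν)
    (hg : AEMeasurable g ν) {r q : ℝ} (hr : 1 ≤ r) (hq : q = 2 * r / (2 * r - 1)) {A : ℝ≥0∞}
    (hrow : ∀ x, ∫⁻ y, k x y ^ r ∂ν ≤ A) (hcol : ∀ y, ∫⁻ x, k x y ^ r ∂ν ≤ A) :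
    ∫⁻ x, ∫⁻ y, k x y * f y * g x ∂ν ∂ν ≤
      A ^ (1 / r) * (∫⁻ y, f y ^ q ∂ν) ^ (1 / q) * (∫⁻ x, g x ^ q ∂ν) ^ (1 / q) := by
  have hr0 : 0 < r := by linarith
  have hq0 : 0 < q := by rw [hq]; exact div_pos (by linarith) (by linarith)
  set a : ℝ := 1 / (2 * r)
  set b : ℝ := 1 - 1 / r
  have ha : 0 ≤ a := by positivity
  have hb : 0 ≤ b := sub_nonneg.2 ((div_le_one hr0).2 hr)
  have h2a : a + a = 1 / r := by simp only [a]; field_simp; ring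
  have hab : a + b = 1 / q := by rw [hq]; simp only [a, b]; field_simp; ring
  set F := ∫⁻ y, f y ^ q ∂ν
  set G := ∫⁻ x, g x ^ q ∂ν
  have hkr : Measurable fun z : α × α => k z.1 z.2 ^ r := hk.pow_const r
  have hF : ∫⁻ z, k z.1 z.2 ^ r * f z.2 ^ q ∂ν.prod ν ≤ A * F := by
    rw [lintegral_prod_symm (fun z => k z.1 z.2 ^ r * f z.2 ^ q)
      (hkr.aemeasurable.mul (hf.pow_const q).comp_snd)]
    calc ∫⁻ y, ∫⁻ x, k x y ^ r * f y ^ q ∂ν ∂ν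
        = ∫⁻ y, (∫⁻ x, k x y ^ r ∂ν) * f y ^ q ∂ν :=
          lintegral_congr fun y => lintegral_mul_const _ (hk.of_uncurry_right.pow_const r)
      _ ≤ ∫⁻ y, A * f y ^ q ∂ν := by gcongr with y; exact hcol y
      _ = A * F := lintegral_const_mul'' _ (hf.pow_const q)
  have hG : ∫⁻ z, k z.1 z.2 ^ r * g z.1 ^ q ∂ν.prod ν ≤ A * G := by
    rw [lintegral_prod (fun z => k z.1 z.2 ^ r * g z.1 ^ q)
      (hkr.aemeasurable.mul (hg.pow_const q).comp_fst)]
    calc ∫⁻ x, ∫⁻ y, k x y ^ r * g x ^ q ∂ν ∂ν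
        = ∫⁻ x, (∫⁻ y, k x y ^ r ∂ν) * g x ^ q ∂ν :=
          lintegral_congr fun x => lintegral_mul_const _ (hk.of_uncurry_left.pow_const r)
      _ ≤ ∫⁻ x, A * g x ^ q ∂ν := by gcongr with x; exact hrow x
      _ = A * G := lintegral_const_mul'' _ (hg.pow_const q)
  have hFG : ∫⁻ z, f z.2 ^ q * g z.1 ^ q ∂ν.prod ν = F * G := by
    simp_rw [mul_comm (f _ ^ q)]
    rw [lintegral_prod_mul (hg.pow_const q) (hf.pow_const q), mul_comm]
  calc ∫⁻ x, ∫⁻ y, k x y * f y * g x ∂ν ∂ν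
      = ∫⁻ z, (k z.1 z.2 ^ r * f z.2 ^ q) ^ a * (k z.1 z.2 ^ r * g z.1 ^ q) ^ a
          * (f z.2 ^ q * g z.1 ^ q) ^ b ∂ν.prod ν := by
        rw [lintegral_prod _ (by fun_prop)]
        refine lintegral_congr fun x => lintegral_congr fun y => ?_
        exact mul_mul_eq_rpow_mul_rpow_mul_rpow _ _ _ hr0.le hq0.le ha hb
          (by rw [← mul_add, h2a]; field_simp) (by rw [← mul_add, hab]; field_simp)
    _ ≤ (A * F) ^ a * (A * G) ^ a * (F * G) ^ b := by
        refine (lintegral_mul_mul_norm_pow_le (by fun_prop) (by fun_prop) (by fun_prop)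
          ha ha hb (by simp only [a, b]; field_simp; ring)).trans ?_
        rw [hFG]
        gcongr
    _ = A ^ (a + a) * F ^ (a + b) * G ^ (a + b) := by
        simp only [mul_rpow_of_nonneg _ _ ha, mul_rpow_of_nonneg _ _ hb,
          rpow_add_of_nonneg _ _ ha ha, rpow_add_of_nonneg _ _ ha hb]
        ring
    _ = A ^ (1 / r) * F ^ (1 / q) * G ^ (1 / q) := by rw [h2a, hab]

theorem lintegral_lintegral_mul_sq_mul_mul_le {ν : Measure α} [SFinite ν]
    {k : α → α → ℝ≥0∞} {f g h : α → ℝ≥0∞} (hk : Measurable (uncurry k)) (hf : AEMeasurable f ν)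
    (hg : AEMeasurable g ν) (hh : AEMeasurable h ν) {r q : ℝ} (hr : 1 ≤ r)
    (hq : q = 2 * r / (2 * r - 1)) {A : ℝ≥0∞}
    (hrow : ∀ x, ∫⁻ y, k x y ^ r ∂ν ≤ A) (hcol : ∀ y, ∫⁻ x, k x y ^ r ∂ν ≤ A) :
    ∫⁻ x, ∫⁻ y, k x y * f y ^ 2 * (g x * h x) ∂ν ∂ν ≤
      A ^ (1 / r) * ((∫⁻ y, f y ^ (2 * q) ∂ν) ^ (1 / (2 * q))) ^ 2
        * (∫⁻ x, g x ^ (2 * q) ∂ν) ^ (1 / (2 * q)) * (∫⁻ x, h x ^ (2 * q) ∂ν) ^ (1 / (2 * q)) := by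
  have hq0 : 0 < q := by rw [hq]; exact div_pos (by linarith) (by linarith)
  have hsq : (∫⁻ y, (f y ^ 2) ^ q ∂ν) ^ (1 / q)
      = ((∫⁻ y, f y ^ (2 * q) ∂ν) ^ (1 / (2 * q))) ^ 2 := by
    simp_rw [← ENNReal.rpow_natCast, ← ENNReal.rpow_mul]
    congr 2
    push_cast
    ring
  have hgh : (∫⁻ x, (g x * h x) ^ q ∂ν) ^ (1 / q)
      ≤ (∫⁻ x, g x ^ (2 * q) ∂ν) ^ (1 / (2 * q)) * (∫⁻ x, h x ^ (2 * q) ∂ν) ^ (1 / (2 * q)) :=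
    lintegral_Lp_mul_le_Lq_mul_Lr hq0 (by linarith) (by field_simp; ring) ν hg hh
  calc _ ≤ A ^ (1 / r) * (∫⁻ y, (f y ^ 2) ^ q ∂ν) ^ (1 / q)
          * (∫⁻ x, (g x * h x) ^ q ∂ν) ^ (1 / q) :=
        lintegral_lintegral_mul_le_of_lintegral_rpow_le hk (hf.pow_const 2) (hg.mul hh) hr hq
          hrow hcol
    _ ≤ _ := by rw [hsq, mul_assoc _ _ (_ ^ (1 / (2 * q)))]; gcongr

theorem enorm_integral_mul_integral_le {𝕜 : Type*} [NormedDivisionRing 𝕜] [NormedSpace ℝ 𝕜]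
    {ν : Measure α} {G : α → α → 𝕜} {k : α → α → ℝ≥0∞}
    (hGk : ∀ᵐ x ∂ν, ∀ᵐ y ∂ν, ‖G x y‖ₑ ≤ k x y) (φ ψ : α → 𝕜) :
    ‖∫ x, (∫ y, G x y * φ y ∂ν) * ψ x ∂ν‖ₑ ≤ ∫⁻ x, ∫⁻ y, k x y * ‖φ y‖ₑ * ‖ψ x‖ₑ ∂ν ∂ν := by
  calc _ ≤ ∫⁻ x, ‖∫ y, G x y * φ y ∂ν‖ₑ * ‖ψ x‖ₑ ∂ν :=
        (enorm_integral_le_lintegral_enorm _).trans_eq (by simp_rw [enorm_mul])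
    _ ≤ ∫⁻ x, (∫⁻ y, k x y * ‖φ y‖ₑ ∂ν) * ‖ψ x‖ₑ ∂ν := by
        refine lintegral_mono_ae (hGk.mono fun x hx => ?_)
        gcongr
        refine (enorm_integral_le_lintegral_enorm _).trans
          (lintegral_mono_ae (hx.mono fun y hy => ?_))
        rw [enorm_mul]
        gcongr
    _ = _ := lintegral_congr fun x => (lintegral_mul_const' _ _ enorm_ne_top).symm

theorem integral_abs_rpow_eq_toReal_lintegral {μ : Measure α} {f : α → ℝ} (hf : AEMeasurable f μ)
    {p : ℝ} (hp : 0 ≤ p) : ∫ x, |f x| ^ p ∂μ = (∫⁻ x, ‖f x‖ₑ ^ p ∂μ).toReal := by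
  rw [integral_eq_lintegral_of_nonneg_ae (ae_of_all _ fun x => by positivity)
    (hf.abs.pow_const p).aestronglyMeasurable]
  simp_rw [enorm_eq_ofReal_abs, ofReal_rpow_of_nonneg (abs_nonneg _) hp]

theorem lintegral_enorm_rpow_ne_top {μ : Measure α} {f : α → ℝ} {p : ℝ} (hp : 0 ≤ p)
    (hf : Integrable (fun x => |f x| ^ p) μ) : ∫⁻ x, ‖f x‖ₑ ^ p ∂μ ≠ ⊤ := by
  have := hf.hasFiniteIntegral.ne
  simpa only [Real.enorm_rpow_of_nonneg (abs_nonneg _) hp, enorm_abs] using this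

theorem setLIntegral_setLIntegral_sub_mul_sq_mul_mul_le {E : Type*} [MeasurableSpace E]
    [AddGroup E] [MeasurableAdd₂ E] [MeasurableNeg E] {μ : Measure E} [SFinite μ]
    [μ.IsAddLeftInvariant] [μ.IsAddRightInvariant] [μ.IsNegInvariant] (s : Set E)
    {K f g h : E → ℝ≥0∞} (hK : Measurable K) (hf : AEMeasurable f (μ.restrict s))
    (hg : AEMeasurable g (μ.restrict s)) (hh : AEMeasurable h (μ.restrict s)) {r q : ℝ}
    (hr : 1 ≤ r) (hq : q = 2 * r / (2 * r - 1)) :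
    ∫⁻ x in s, ∫⁻ y in s, K (x - y) * f y ^ 2 * (g x * h x) ∂μ ∂μ ≤
      (∫⁻ z, K z ^ r ∂μ) ^ (1 / r) * ((∫⁻ y in s, f y ^ (2 * q) ∂μ) ^ (1 / (2 * q))) ^ 2
        * (∫⁻ x in s, g x ^ (2 * q) ∂μ) ^ (1 / (2 * q))
        * (∫⁻ x in s, h x ^ (2 * q) ∂μ) ^ (1 / (2 * q)) :=
  lintegral_lintegral_mul_sq_mul_mul_le (k := fun x y => K (x - y)) (by fun_prop) hf hg hh hr hq
    (fun x => (setLIntegral_le_lintegral _ _).trans_eq (lintegral_sub_left_eq_self (K · ^ r) x))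
    (fun y => (setLIntegral_le_lintegral _ _).trans_eq (lintegral_sub_right_eq_self (K · ^ r) y))

theorem stmt7_general {N : ℕ} (hN : 2 ≤ N) (Ω : Set (Fin N → ℝ))
    (hΩm : MeasurableSet Ω)
    (G : (Fin N → ℝ) → (Fin N → ℝ) → ℝ) (W : (Fin N → ℝ) → ℝ) (r q : ℝ)
    (hrN : (N : ℝ) / 2 < r) (hq : q = 2 * r / (2 * r - 1))
    (hG0 : ∀ x y, 0 ≤ G x y)
    (hGW : ∀ x ∈ Ω, ∀ y ∈ Ω, G x y ≤ W (x - y))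
    (hW0 : ∀ x, 0 ≤ W x) (hWm : Measurable W)
    (hWr : Integrable (fun x => W x ^ r)) :
    ∃ C > (0:ℝ), ∀ u v w : (Fin N → ℝ) → ℝ,
      Measurable u → Measurable v → Measurable w →
      IntegrableOn (fun x => |u x| ^ (2 * q)) Ω →
      IntegrableOn (fun x => |v x| ^ (2 * q)) Ω →
      IntegrableOn (fun x => |w x| ^ (2 * q)) Ω →
      |∫ x in Ω, (∫ y in Ω, G x y * (v y) ^ 2) * (u x * w x)| ≤
        C * ((∫ x in Ω, |v x| ^ (2 * q)) ^ (1 / (2 * q))) ^ 2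
          * (∫ x in Ω, |u x| ^ (2 * q)) ^ (1 / (2 * q))
          * (∫ x in Ω, |w x| ^ (2 * q)) ^ (1 / (2 * q)) := by
  have hr : 1 ≤ r := by
    have : (2 : ℝ) ≤ N := mod_cast hN
    linarith
  have hq0 : 0 ≤ 2 * q := by
    rw [hq]; exact mul_nonneg zero_le_two (div_nonneg (by linarith) (by linarith))
  set A := ∫⁻ z, ‖W z‖ₑ ^ r
  have hA : A ≠ ⊤ :=
    lintegral_enorm_rpow_ne_top (by linarith) (by simpa [abs_of_nonneg (hW0 _)] using hWr)
  refine ⟨(A ^ (1 / r)).toReal + 1, by positivity, fun u v w hu hv hw hiu hiv hiw => ?_⟩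
  have hGW' : ∀ᵐ x ∂volume.restrict Ω, ∀ᵐ y ∂volume.restrict Ω, ‖G x y‖ₑ ≤ ‖W (x - y)‖ₑ := by
    filter_upwards [ae_restrict_mem hΩm] with x hx
    filter_upwards [ae_restrict_mem hΩm] with y hy
    simpa only [enorm_le_iff_norm_le, Real.norm_of_nonneg (hG0 x y), Real.norm_of_nonneg (hW0 _)]
      using hGW x hx y hy
  set B := A ^ (1 / r) * ((∫⁻ y in Ω, ‖v y‖ₑ ^ (2 * q)) ^ (1 / (2 * q))) ^ 2
    * (∫⁻ x in Ω, ‖u x‖ₑ ^ (2 * q)) ^ (1 / (2 * q)) * (∫⁻ x in Ω, ‖w x‖ₑ ^ (2 * q)) ^ (1 / (2 * q))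
  have key : ‖∫ x in Ω, (∫ y in Ω, G x y * v y ^ 2) * (u x * w x)‖ₑ ≤ B := by
    refine (enorm_integral_mul_integral_le hGW' _ _).trans ?_
    simp only [enorm_pow, enorm_mul]
    exact setLIntegral_setLIntegral_sub_mul_sq_mul_mul_le Ω hWm.enorm hv.enorm.aemeasurable
      hu.enorm.aemeasurable hw.enorm.aemeasurable hr hq
  have hB : B ≠ ⊤ := by
    have hIu := lintegral_enorm_rpow_ne_top hq0 hiu
    have hIv := lintegral_enorm_rpow_ne_top hq0 hiv
    have hIw := lintegral_enorm_rpow_ne_top hq0 hiw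
    simp only [B]
    finiteness
  rw [integral_abs_rpow_eq_toReal_lintegral hu.aemeasurable hq0,
    integral_abs_rpow_eq_toReal_lintegral hv.aemeasurable hq0,
    integral_abs_rpow_eq_toReal_lintegral hw.aemeasurable hq0]
  calc _ = ‖∫ x in Ω, (∫ y in Ω, G x y * v y ^ 2) * (u x * w x)‖ₑ.toReal := by
        rw [toReal_enorm, Real.norm_eq_abs]
    _ ≤ B.toReal := toReal_mono hB key
    _ ≤ _ := by
        simp only [B, toReal_mul, toReal_pow, toReal_rpow]
        gcongr
        linarith

/-- For a measurable `G : Ω × Ω → [0,∞)` with `G(x,y) ≤ W(x-y)`, where `W ≥ 0`,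
`W ∈ L^r(ℝ^N)` with `r > N/2`, `W = 0` outside `Ω`, and `q = 2r/(2r-1)`, there is `C_G > 0`
with `|∫_Ω ⟨G,v²⟩ u w| ≤ C_G ‖v‖²_{L^{2q}(Ω)} ‖u‖_{L^{2q}(Ω)} ‖w‖_{L^{2q}(Ω)}`. -/
theorem stmt7 {N : ℕ} (hN : 2 ≤ N) (Ω : Set (Fin N → ℝ)) (hΩ : Bornology.IsBounded Ω)
    (hΩm : MeasurableSet Ω)
    (G : (Fin N → ℝ) → (Fin N → ℝ) → ℝ) (W : (Fin N → ℝ) → ℝ) (r q : ℝ)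
    (hrN : (N : ℝ) / 2 < r) (hq : q = 2 * r / (2 * r - 1))
    (hGm : Measurable (Function.uncurry G)) (hG0 : ∀ x y, 0 ≤ G x y)
    (hGW : ∀ x ∈ Ω, ∀ y ∈ Ω, G x y ≤ W (x - y))
    (hW0 : ∀ x, 0 ≤ W x) (hWm : Measurable W)
    (hWr : Integrable (fun x => W x ^ r))
    (hWout : ∀ z, z ∉ Ω → W z = 0) :
    ∃ C > (0:ℝ), ∀ u v w : (Fin N → ℝ) → ℝ,
      Measurable u → Measurable v → Measurable w →
      IntegrableOn (fun x => |u x| ^ (2 * q)) Ω →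
      IntegrableOn (fun x => |v x| ^ (2 * q)) Ω →
      IntegrableOn (fun x => |w x| ^ (2 * q)) Ω →
      |∫ x in Ω, (∫ y in Ω, G x y * (v y) ^ 2) * (u x * w x)| ≤
        C * ((∫ x in Ω, |v x| ^ (2 * q)) ^ (1 / (2 * q))) ^ 2
          * (∫ x in Ω, |u x| ^ (2 * q)) ^ (1 / (2 * q))
          * (∫ x in Ω, |w x| ^ (2 * q)) ^ (1 / (2 * q)) :=
  stmt7_general hN Ω hΩm G W r q hrN hq hG0 hGW hW0 hWm hWr
end

section
/- Let (u_n) be a Cerami sequence for J₊ at level ≤ M. Then ∫_Ω ⟨G,(u_n⁺)²⟩(u_n⁺)² dx is bounded: there exists M' ≥ 0 with 0 ≤ ∫_Ω⟨G,(u_n⁺)²⟩(u_n⁺)²dx ≤ M' for all n. -/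
open MeasureTheory Real Filter Topology
open scoped RealInnerProductSpace

/-- For a Cerami sequence `(u_n)` of `J₊` at level `≤ M`, the Hartree terms
`∫_Ω ⟨G,(u_n⁺)²⟩(u_n⁺)² dx` are bounded: there is `M' ≥ 0` with
`0 ≤ ∫⟨G,(u_n⁺)²⟩(u_n⁺)² ≤ M'` for all `n`. -/
theorem stmt13 {N : ℕ} (hN : 2 ≤ N) (Ω : Set (Fin N → ℝ))
    {H : Type*} [NormedAddCommGroup H] [InnerProductSpace ℝ H]
    (γ : H →ₗ[ℝ] ((Fin N → ℝ) → ℝ)) (pos : H → H)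
    (m ω lam : ℝ) (G : (Fin N → ℝ) → (Fin N → ℝ) → ℝ)
    (f F : (Fin N → ℝ) → ℝ → ℝ) (β : (Fin N → ℝ) → ℝ) (J : H → ℝ)
    (hm : 0 < m) (hω : ω < m) (hlam : 0 < lam)
    (hf0 : ∀ x, f x 0 = 0) (hG0 : ∀ x y, 0 ≤ G x y)
    -- positive part map
    (hsplit : ∀ w : H, w = pos w - pos (-w))
    (horth : ∀ w : H, ⟪pos w, pos (-w)⟫ = 0)
    (hγpos : ∀ (w : H) (x : Fin N → ℝ), γ (pos w) x = max (γ w x) 0)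
    -- the functional and its derivative
    (hJ : ∀ w : H, J w = (1/2) * ‖w‖ ^ 2
      - (ω / 2) * (∫ x in Ω, (γ w x) ^ 2)
      - (lam / 4) * (∫ x in Ω, (∫ y in Ω, G x y * (max (γ w y) 0) ^ 2) * (max (γ w x) 0) ^ 2)
      - ∫ x in Ω, F x (max (γ w x) 0))
    (hdiff : ∀ w : H, DifferentiableAt ℝ J w)
    (hJ' : ∀ w h : H, fderiv ℝ J w h = ⟪w, h⟫
      - ω * (∫ x in Ω, γ w x * γ h x)
      - lam * (∫ x in Ω, (∫ y in Ω, G x y * (max (γ w y) 0) ^ 2) * max (γ w x) 0 * γ h x)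
      - ∫ x in Ω, f x (max (γ w x) 0) * γ h x)
    (htr : ∀ w : H, ∫ x in Ω, (γ w x) ^ 2 ≤ (1 / m) * ‖w‖ ^ 2)
    -- lower bound for σ(x,s) = f(x,s)s − 2F(x,s) on s ≥ 0 (from (Hiii))
    (hβ0 : ∀ᵐ x ∂(volume.restrict Ω), 0 ≤ β x)
    (hβ1 : Integrable β (volume.restrict Ω))
    (hσ : ∀ᵐ x ∂(volume.restrict Ω), ∀ s : ℝ, 0 ≤ s →
      -β x ≤ f x s * s - 2 * F x s)
    -- integrability of the composed terms
    (hint : ∀ w : H,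
      Integrable (fun x => F x (max (γ w x) 0)) (volume.restrict Ω) ∧
      Integrable (fun x => f x (max (γ w x) 0) * max (γ w x) 0) (volume.restrict Ω) ∧
      Integrable (fun x => (γ w x) ^ 2) (volume.restrict Ω))
    -- the Cerami sequence at level ≤ M
    (u : ℕ → H) (M : ℝ) (hJb : ∀ n, |J (u n)| ≤ M)
    (hcer : Tendsto (fun n => (1 + ‖u n‖) * ‖fderiv ℝ J (u n)‖) atTop (𝓝 0)) :
    ∃ M' : ℝ, 0 ≤ M' ∧ ∀ n,
      0 ≤ (∫ x in Ω, (∫ y in Ω, G x y * (max (γ (u n) y) 0) ^ 2) * (max (γ (u n) x) 0) ^ 2) ∧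
      (∫ x in Ω, (∫ y in Ω, G x y * (max (γ (u n) y) 0) ^ 2) * (max (γ (u n) x) 0) ^ 2) ≤ M' := by
  classical
  -- the Hartree term
  set Q : H → ℝ := fun w =>
    ∫ x in Ω, (∫ y in Ω, G x y * (max (γ w y) 0) ^ 2) * (max (γ w x) 0) ^ 2 with hQdef
  have hQnonneg : ∀ w, 0 ≤ Q w := by
    intro w
    refine integral_nonneg fun x => ?_
    exact mul_nonneg (integral_nonneg fun y => mul_nonneg (hG0 x y) (sq_nonneg _)) (sq_nonneg _)
  -- pointwise identities
  have hmax : ∀ a : ℝ, max a 0 * a = (max a 0) ^ 2 := by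
    intro a
    rcases le_total a 0 with h | h
    · simp [max_eq_right h]
    · simp [max_eq_left h, sq]
  have hfmax : ∀ x (a : ℝ), f x (max a 0) * a = f x (max a 0) * max a 0 := by
    intro x a
    rcases le_total a 0 with h | h
    · simp [max_eq_right h, hf0 x]
    · simp [max_eq_left h]
  -- key identity
  have key : ∀ w : H, (lam / 4) * Q w = J w - (1 / 2) * fderiv ℝ J w w
      - (1 / 2) * ∫ x in Ω,
        (f x (max (γ w x) 0) * max (γ w x) 0 - 2 * F x (max (γ w x) 0)) := by
    intro w
    obtain ⟨hF, hfs, h2⟩ := hint w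
    have e1 : (∫ x in Ω, (∫ y in Ω, G x y * (max (γ w y) 0) ^ 2) * max (γ w x) 0 * γ w x)
        = Q w := by
      refine integral_congr_ae (Eventually.of_forall fun x => ?_)
      dsimp only
      rw [mul_assoc, hmax]
    have e2 : (∫ x in Ω, f x (max (γ w x) 0) * γ w x)
        = ∫ x in Ω, f x (max (γ w x) 0) * max (γ w x) 0 := by
      refine integral_congr_ae (Eventually.of_forall fun x => ?_)
      exact hfmax x (γ w x)
    have e3 : (∫ x in Ω,
        (f x (max (γ w x) 0) * max (γ w x) 0 - 2 * F x (max (γ w x) 0)))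
        = (∫ x in Ω, f x (max (γ w x) 0) * max (γ w x) 0)
          - 2 * ∫ x in Ω, F x (max (γ w x) 0) := by
      rw [integral_sub hfs (hF.const_mul 2)]
      congr 1
      simpa [smul_eq_mul] using
        integral_smul (μ := volume.restrict Ω) (2 : ℝ) (fun x => F x (max (γ w x) 0))
    have e4 : fderiv ℝ J w w = ‖w‖ ^ 2 - ω * (∫ x in Ω, (γ w x) ^ 2)
        - lam * Q w - ∫ x in Ω, f x (max (γ w x) 0) * max (γ w x) 0 := by
      have e0 : (∫ x in Ω, γ w x * γ w x) = ∫ x in Ω, (γ w x) ^ 2 := by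
        refine integral_congr_ae (Eventually.of_forall fun x => ?_)
        dsimp only
        rw [sq]
      rw [hJ' w w, real_inner_self_eq_norm_sq, e1, e2, e0]
    rw [e3, e4, hJ w]
    ring
  -- a bound on the Cerami quantity
  obtain ⟨C, hC⟩ := hcer.bddAbove_range
  have hCb : ∀ n, (1 + ‖u n‖) * ‖fderiv ℝ J (u n)‖ ≤ C := fun n => hC ⟨n, rfl⟩
  -- bound the sigma integral from below
  have hσint : ∀ w : H, Integrable (fun x =>
      f x (max (γ w x) 0) * max (γ w x) 0 - 2 * F x (max (γ w x) 0))
      (volume.restrict Ω) := fun w => (hint w).2.1.sub ((hint w).1.const_mul 2)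
  have hσlb : ∀ w : H, -(∫ x in Ω, β x) ≤ ∫ x in Ω,
      (f x (max (γ w x) 0) * max (γ w x) 0 - 2 * F x (max (γ w x) 0)) := by
    intro w
    rw [← integral_neg]
    refine integral_mono_ae hβ1.neg (hσint w) ?_
    filter_upwards [hσ] with x hx
    exact hx _ (le_max_right _ 0)
  -- bound (lam/4) * Q (u n)
  have hQb : ∀ n, (lam / 4) * Q (u n) ≤ M + (1 / 2) * C + (1 / 2) * ∫ x in Ω, β x := by
    intro n
    rw [key (u n)]
    have h1 : J (u n) ≤ M := (abs_le.mp (hJb n)).2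
    have h2 : |fderiv ℝ J (u n) (u n)| ≤ C := by
      calc |fderiv ℝ J (u n) (u n)| ≤ ‖fderiv ℝ J (u n)‖ * ‖u n‖ :=
            (fderiv ℝ J (u n)).le_opNorm (u n)
        _ ≤ (1 + ‖u n‖) * ‖fderiv ℝ J (u n)‖ := by
            rw [mul_comm]
            exact mul_le_mul_of_nonneg_right (by linarith [norm_nonneg (u n)]) (norm_nonneg _)
        _ ≤ C := hCb n
    have h2' : -(C : ℝ) ≤ fderiv ℝ J (u n) (u n) := (abs_le.mp h2).1
    have h3 := hσlb (u n)
    nlinarith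
  -- finish
  have hlam4 : (0 : ℝ) < lam / 4 := by linarith
  set B : ℝ := M + (1 / 2) * C + (1 / 2) * ∫ x in Ω, β x with hBdef
  have hBeq : lam / 4 * (4 / lam * B) = B := by
    field_simp
  have hQle : ∀ n, Q (u n) ≤ 4 / lam * B := by
    intro n
    have hb := hQb n
    rw [← hBeq] at hb
    exact le_of_mul_le_mul_left hb hlam4
  refine ⟨4 / lam * B, ?_, fun n => ?_⟩
  · exact le_trans (hQnonneg (u 0)) (hQle 0)
  · exact ⟨hQnonneg (u n), hQle n⟩
end
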